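/- In the Case I setting, let I' be the two-sided *-ideal of Pol(O_F^+) generated by all entries of the blocks C_{ρμ} (1 ≤ ρ,μ ≤ r), X_μ and R_μ (1 ≤ μ ≤ r), and A_{ρμ} with ρ ≠ μ. Then Pol(O_F^+)/I' is *-isomorphic to the universal unital complex *-algebra generated by families a^{(ν)}_{jk} (ν = 1,…,r, 1 ≤ j,k ≤ M_ν) and z_{pq} (1 ≤ p,q ≤ N−2K) subject to: for each ν, both A_ν = (a^{(ν)}_{jk}) and conj(A_ν) = ((a^{(ν)}_{jk})^*) are unitary; z_{pq}^* = z_{pq}; and Z·Zᵗ = I_{N−2K} = Zᵗ·Z for Z = (z_{pq}). The isomorphism sends the class of an entry of A_{νν} to the corresponding a^{(ν)}_{jk} and the class of an entry of (u_{jk})_{j,k∈T} to the corresponding z_{pq}. (This presented algebra is the free product (⋆_{ν=1}^r Pol(U_{M_ν}^+)) ⋆ Pol(O_{N−2K}^+).) -/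

import Mathlib

open scoped ComplexOrder

/-- The defining relations of `Pol(O_F⁺)`: `U` is unitary and `U·F = F·conj(U)`
(equivalently `U = F·conj(U)·F⁻¹`). -/
def OrthRel {ι : Type} [Fintype ι] [DecidableEq ι] {A : Type} [Ring A] [Algebra ℂ A]
    [StarRing A] (F : Matrix ι ι ℂ) (u : Matrix ι ι A) : Prop :=
  u * u.conjTranspose = 1 ∧ u.conjTranspose * u = 1 ∧
    u * F.map (algebraMap ℂ A) = F.map (algebraMap ℂ A) * u.map star

/-- A presentation of the universal unital complex *-algebra `Pol(O_F⁺)`: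
a unital complex *-algebra carrying a matrix of generators `u` satisfying the
defining relations, universal among all such. -/
structure PolO {ι : Type} [Fintype ι] [DecidableEq ι] (F : Matrix ι ι ℂ) where
  carrier : Type
  [isRing : Ring carrier]
  [isAlgebra : Algebra ℂ carrier]
  [isStarRing : StarRing carrier]
  [isStarModule : StarModule ℂ carrier]
  u : Matrix ι ι carrier
  rel : OrthRel F u
  universal : ∀ (B : Type) [Ring B] [Algebra ℂ B] [StarRing B] [StarModule ℂ B]
      (v : Matrix ι ι B), OrthRel F v →
      ∃! φ : carrier →⋆ₐ[ℂ] B, ∀ j k, φ (u j k) = v j k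

attribute [instance] PolO.isRing PolO.isAlgebra PolO.isStarRing PolO.isStarModule

/-- The defining relations of `Pol(U_N⁺)`: both `U` and `conj(U)` are unitary. -/
def BiUnitary {ι : Type} [Fintype ι] [DecidableEq ι] {A : Type} [Ring A] [Algebra ℂ A]
    [StarRing A] (u : Matrix ι ι A) : Prop :=
  u * u.conjTranspose = 1 ∧ u.conjTranspose * u = 1 ∧
    u.map star * (u.map star).conjTranspose = 1 ∧ (u.map star).conjTranspose * u.map star = 1

/-- A presentation of the universal unital complex *-algebra `Pol(U_N⁺)` (`N = #ι`). -/
structure PolU (ι : Type) [Fintype ι] [DecidableEq ι] where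
  carrier : Type
  [isRing : Ring carrier]
  [isAlgebra : Algebra ℂ carrier]
  [isStarRing : StarRing carrier]
  [isStarModule : StarModule ℂ carrier]
  u : Matrix ι ι carrier
  rel : BiUnitary u
  universal : ∀ (B : Type) [Ring B] [Algebra ℂ B] [StarRing B] [StarModule ℂ B]
      (v : Matrix ι ι B), BiUnitary v →
      ∃! φ : carrier →⋆ₐ[ℂ] B, ∀ j k, φ (u j k) = v j k

attribute [instance] PolU.isRing PolU.isAlgebra PolU.isStarRing PolU.isStarModule

/-- A unital complex *-algebra is RFD if finite-dimensional *-representations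
separate its points. -/
def IsRFD (A : Type) [Ring A] [Algebra ℂ A] [StarRing A] : Prop :=
  ∀ a : A, a ≠ 0 → ∃ (n : ℕ) (π : A →⋆ₐ[ℂ] Matrix (Fin n) (Fin n) ℂ), π a ≠ 0

/-- A tracial state on a unital complex *-algebra. -/
structure TracialState (A : Type) [Ring A] [Algebra ℂ A] [StarRing A] where
  toFun : A →ₗ[ℂ] ℂ
  map_one' : toFun 1 = 1
  nonneg' : ∀ a : A, 0 ≤ toFun (star a * a)
  tracial' : ∀ a b : A, toFun (a * b) = toFun (b * a)

/-- The Kac ideal: elements killed by `τ(a^* a)` for every tracial state `τ`. -/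
def kacIdeal (A : Type) [Ring A] [Algebra ℂ A] [StarRing A] : Set A :=
  {a : A | ∀ τ : TracialState A, τ.toFun (star a * a) = 0}

/-- The RFD ideal: the intersection of the kernels of all finite-dimensional
*-representations. -/
def rfdIdeal (A : Type) [Ring A] [Algebra ℂ A] [StarRing A] : Set A :=
  {a : A | ∀ (n : ℕ) (π : A →⋆ₐ[ℂ] Matrix (Fin n) (Fin n) ℂ), π a = 0}

/-- A subset of a *-ring which is a two-sided ideal closed under the star operation. -/
def IsStarIdeal {A : Type} [Ring A] [StarRing A] (T : Set A) : Prop :=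
  (0 : A) ∈ T ∧ (∀ a b, a ∈ T → b ∈ T → a + b ∈ T) ∧
    (∀ x a, a ∈ T → x * a ∈ T ∧ a * x ∈ T) ∧ (∀ a, a ∈ T → star a ∈ T)

/-- The two-sided *-ideal generated by a set. -/
def starIdealSpan {A : Type} [Ring A] [StarRing A] (S : Set A) : Set A :=
  ⋂₀ {T : Set A | IsStarIdeal T ∧ S ⊆ T}

/-- The index set in the Case I setting: for each `ν = 1,…,r` a block `P_ν ⊕ Q_ν` of size
`2M_ν`, followed by a set `T` of size `s = N − 2K`. -/
abbrev CaseIIdx (r : ℕ) (M : Fin r → ℕ) (s : ℕ) : Type :=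
  (Σ ν : Fin r, (Fin (M ν) ⊕ Fin (M ν))) ⊕ Fin s

/-- The Case I matrix `F`: block-diagonal with blocks `[[0, q_ν·I_{M_ν}], [q_ν⁻¹·I_{M_ν}, 0]]`
for `ν = 1,…,r`, followed by the identity `I_{N−2K}`. -/
noncomputable def FCaseI (r : ℕ) (q : Fin r → ℝ) (M : Fin r → ℕ) (s : ℕ) :
    Matrix (CaseIIdx r M s) (CaseIIdx r M s) ℂ := fun a b =>
  match a, b with
  | .inl ⟨ν, .inl j⟩, .inl ⟨μ, .inr k⟩ =>
      if ν = μ ∧ (j : ℕ) = (k : ℕ) then ((q ν : ℝ) : ℂ) else 0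
  | .inl ⟨ν, .inr j⟩, .inl ⟨μ, .inl k⟩ =>
      if ν = μ ∧ (j : ℕ) = (k : ℕ) then (((q ν)⁻¹ : ℝ) : ℂ) else 0
  | .inr p, .inr t => if p = t then 1 else 0
  | _, _ => 0

/-- A presentation of the free product `(⋆_{ν=1}^r Pol(U⁺_{M_ν})) ⋆ Pol(O⁺_{N−2K})`:
the universal unital complex *-algebra generated by families `a⁽ᵛ⁾` with `A_ν` and
`conj(A_ν)` unitary, and `z` with self-adjoint entries and `Z·Zᵗ = I = Zᵗ·Z`. -/
structure FreeProdUO (r : ℕ) (M : Fin r → ℕ) (s : ℕ) where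
  carrier : Type
  [isRing : Ring carrier]
  [isAlgebra : Algebra ℂ carrier]
  [isStarRing : StarRing carrier]
  [isStarModule : StarModule ℂ carrier]
  a : ∀ ν : Fin r, Matrix (Fin (M ν)) (Fin (M ν)) carrier
  z : Matrix (Fin s) (Fin s) carrier
  rel_a : ∀ ν, BiUnitary (a ν)
  rel_z_star : ∀ p t, star (z p t) = z p t
  rel_z : z * z.transpose = 1 ∧ z.transpose * z = 1
  universal : ∀ (B : Type) [Ring B] [Algebra ℂ B] [StarRing B] [StarModule ℂ B]
      (b : ∀ ν : Fin r, Matrix (Fin (M ν)) (Fin (M ν)) B) (w : Matrix (Fin s) (Fin s) B),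
      (∀ ν, BiUnitary (b ν)) → (∀ p t, star (w p t) = w p t) →
      w * w.transpose = 1 → w.transpose * w = 1 →
      ∃! φ : carrier →⋆ₐ[ℂ] B,
        (∀ ν j k, φ (a ν j k) = b ν j k) ∧ ∀ p t, φ (z p t) = w p t

attribute [instance] FreeProdUO.isRing FreeProdUO.isAlgebra FreeProdUO.isStarRing
  FreeProdUO.isStarModule

/-!
Sending `U` to `diag(A_1, conj A_1, …, A_r, conj A_r, Z)` respects the relations of `Pol(O_F⁺)`
exactly when every `A_ν` and `conj A_ν` is unitary and `Z` is orthogonal with self-adjoint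
entries; this yields `φ`, and `φ` kills the generators of `I'`.

Conversely, write `F = diag(w)·perm(σ)` where `σ` swaps `P_ν` and `Q_ν`. Then `U F = F conj(U)`
says entrywise `w_c u_bc = w_b u*_{σb,σc}`. So the blocks `P × Q`, `Q × T`, `T × Q` and
`Q_ν × Q_μ` (`ν ≠ μ`) are entrywise nonzero multiples of adjoints of generators of `I'`, while
the `Q_ν × Q_ν` block is `conj(A_νν)`. Hence `U` is block diagonal of this shape modulo `I'`.
The universal property of the free product then gives `ψ : B → Pol(O_F⁺)/I'` with `ψ ∘ φ` the
quotient map, so `ker φ = I'`. Applying the same property inside the range of `φ` shows that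
`φ` is onto.
-/

section StarIdeal

variable {A : Type} [Ring A] [StarRing A]

theorem isStarIdeal_starIdealSpan (S : Set A) : IsStarIdeal (starIdealSpan S) :=
  ⟨fun _ hT => hT.1.1, fun a b ha hb T hT => hT.1.2.1 a b (ha T hT) (hb T hT),
    fun x a ha => ⟨fun T hT => (hT.1.2.2.1 x a (ha T hT)).1,
      fun T hT => (hT.1.2.2.1 x a (ha T hT)).2⟩,
    fun a ha T hT => hT.1.2.2.2 a (ha T hT)⟩

theorem subset_starIdealSpan (S : Set A) : S ⊆ starIdealSpan S :=
  fun _ hx _ hT => hT.2 hx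

theorem starIdealSpan_subset {S T : Set A} (hT : IsStarIdeal T) (hS : S ⊆ T) :
    starIdealSpan S ⊆ T :=
  Set.sInter_subset_of_mem ⟨hT, hS⟩

theorem isStarIdeal_ker {R B : Type} [CommSemiring R] [Algebra R A] [Ring B] [Algebra R B]
    [StarRing B] (f : A →⋆ₐ[R] B) : IsStarIdeal {x : A | f x = 0} := by
  refine ⟨map_zero f, fun a b ha hb => ?_, fun x a ha => ⟨?_, ?_⟩, fun a ha => ?_⟩ <;>
    simp_all only [Set.mem_ofPred_eq, map_add, map_mul, map_star, add_zero, mul_zero, zero_mul,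
      star_zero]

def IsStarIdeal.toTwoSidedIdeal {I : Set A} (hI : IsStarIdeal I) : TwoSidedIdeal A :=
  .mk' I hI.1 (hI.2.1 _ _) (fun h => by simpa using (hI.2.2.1 (-1) _ h).1)
    (fun h => (hI.2.2.1 _ _ h).1) (fun h => (hI.2.2.1 _ _ h).2)

theorem IsStarIdeal.exists_starAlgHom_ker_eq {R : Type} [CommSemiring R] [StarRing R]
    [Algebra R A] [StarModule R A] {I : Set A} (hI : IsStarIdeal I) :
    ∃ (Q : Type) (_ : Ring Q) (_ : Algebra R Q) (_ : StarRing Q) (_ : StarModule R Q)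
      (π : A →⋆ₐ[R] Q), ∀ x, π x = 0 ↔ x ∈ I := by
  set c := hI.toTwoSidedIdeal.ringCon
  have hc : ∀ a b, c a b ↔ a - b ∈ I := fun a b => by
    rw [TwoSidedIdeal.rel_iff]; exact TwoSidedIdeal.mem_mk' ..
  have hstar : ∀ a b, c a b → c (star a) (star b) := fun a b h => by
    rw [hc, ← star_sub]; exact hI.2.2.2 _ ((hc a b).1 h)
  let _ : StarRing c.Quotient :=
    { star := Quotient.map' star hstar
      star_involutive := fun x => Quotient.inductionOn' x fun a =>
        congrArg (fun t : A => (t : c.Quotient)) (star_star a)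
      star_mul := fun x y => Quotient.inductionOn₂' x y fun a b =>
        congrArg (fun t : A => (t : c.Quotient)) (star_mul a b)
      star_add := fun x y => Quotient.inductionOn₂' x y fun a b =>
        congrArg (fun t : A => (t : c.Quotient)) (star_add a b) }
  let _ : StarModule R c.Quotient :=
    ⟨fun r x => Quotient.inductionOn' x fun a =>
      congrArg (fun t : A => (t : c.Quotient)) (star_smul r a)⟩
  refine ⟨c.Quotient, inferInstance, inferInstance, inferInstance, inferInstance,
    { c.mkₐ R with map_star' := fun _ => rfl }, fun x => ?_⟩
  change ((x : A) : c.Quotient) = ((0 : A) : c.Quotient) ↔ x ∈ I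
  rw [RingCon.eq, hc, sub_zero]

end StarIdeal

open Matrix

section Intertwining

variable {ι : Type} [DecidableEq ι] {A : Type} [Ring A] [Algebra ℂ A]

theorem permMatrix_map_algebraMap (σ : Equiv.Perm ι) :
    (σ.permMatrix ℂ).map (algebraMap ℂ A) = σ.permMatrix A := by
  ext i j
  simp [PEquiv.toMatrix_apply, apply_ite (algebraMap ℂ A)]

theorem mul_map_eq_map_mul_map_star_iff [Fintype ι] [StarRing A] (c : ι → ℂ)
    (σ : Equiv.Perm ι) (u : Matrix ι ι A) :
    u * (diagonal c * σ.permMatrix ℂ).map (algebraMap ℂ A) =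
        (diagonal c * σ.permMatrix ℂ).map (algebraMap ℂ A) * u.map star ↔
      ∀ a b, c b • u a b = c a • star (u (σ a) (σ b)) := by
  rw [Matrix.map_mul, diagonal_map (map_zero _), permMatrix_map_algebraMap, ← Matrix.mul_assoc,
    PEquiv.mul_toMatrix_toPEquiv, Matrix.mul_assoc, PEquiv.toMatrix_toPEquiv_mul, ← Matrix.ext_iff]
  refine forall_congr' fun a => (σ.forall_congr fun b => ?_).symm
  simp [mul_diagonal, diagonal_mul, Algebra.smul_def, Algebra.commutes]

end Intertwining

section CaseI

variable {r : ℕ} {M : Fin r → ℕ} {s : ℕ}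

def caseISwap : Equiv.Perm (CaseIIdx r M s) :=
  Equiv.sumCongr (Equiv.sigmaCongrRight fun _ => Equiv.sumComm _ _) (Equiv.refl _)

@[simp] theorem caseISwap_P (ν : Fin r) (j : Fin (M ν)) :
    caseISwap (.inl ⟨ν, .inl j⟩ : CaseIIdx r M s) = .inl ⟨ν, .inr j⟩ := rfl

@[simp] theorem caseISwap_Q (ν : Fin r) (j : Fin (M ν)) :
    caseISwap (.inl ⟨ν, .inr j⟩ : CaseIIdx r M s) = .inl ⟨ν, .inl j⟩ := rfl

@[simp] theorem caseISwap_T (t : Fin s) :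
    caseISwap (.inr t : CaseIIdx r M s) = .inr t := rfl

@[simp] theorem caseISwap_caseISwap (a : CaseIIdx r M s) : caseISwap (caseISwap a) = a := by
  rcases a with ⟨ν, j | j⟩ | t <;> rfl

noncomputable def caseIWeight (q : Fin r → ℝ) : CaseIIdx r M s → ℂ
  | .inl ⟨ν, .inl _⟩ => ((q ν : ℝ) : ℂ)
  | .inl ⟨ν, .inr _⟩ => (((q ν)⁻¹ : ℝ) : ℂ)
  | .inr _ => 1

theorem caseIWeight_ne_zero {q : Fin r → ℝ} (hq : ∀ ν, q ν ≠ 0) (a : CaseIIdx r M s) :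
    caseIWeight q a ≠ 0 := by
  rcases a with ⟨ν, j | j⟩ | t <;> simp [caseIWeight, hq]

theorem FCaseI_eq_diagonal_mul_permMatrix (q : Fin r → ℝ) :
    FCaseI r q M s = diagonal (caseIWeight q) * caseISwap.permMatrix ℂ := by
  ext a b
  simp only [diagonal_mul, Equiv.Perm.permMatrix, PEquiv.toMatrix_apply, Equiv.toPEquiv_apply,
    Option.mem_some_iff]
  rcases a with ⟨ν, j⟩ | t <;> rcases b with ⟨μ, k⟩ | t'
  · obtain rfl | hνμ := eq_or_ne ν μ
    · rcases j with j | j <;> rcases k with k | k <;> simp [FCaseI, caseIWeight, Fin.val_inj]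
    · rcases j with j | j <;> rcases k with k | k <;> simp [FCaseI, caseIWeight, hνμ]
  all_goals (try rcases j with j | j) <;> (try rcases k with k | k) <;>
    simp [FCaseI, caseIWeight, eq_comm]

end CaseI

section Unitary

variable {A : Type} [Ring A] [StarRing A]

theorem mul_conjTranspose_eq_one_and_iff {ι : Type} [Fintype ι] [DecidableEq ι]
    {u : Matrix ι ι A} : u * uᴴ = 1 ∧ uᴴ * u = 1 ↔ u ∈ unitary (Matrix ι ι A) := by
  rw [Unitary.mem_iff, and_comm, star_eq_conjTranspose]

theorem fromBlocks_zero_zero_mem_unitary_iff {l m : Type} [Fintype l] [Fintype m]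
    [DecidableEq l] [DecidableEq m] {X : Matrix l l A} {Y : Matrix m m A} :
    fromBlocks X 0 0 Y ∈ unitary (Matrix (l ⊕ m) (l ⊕ m) A) ↔
      X ∈ unitary (Matrix l l A) ∧ Y ∈ unitary (Matrix m m A) := by
  simp only [Unitary.mem_iff, star_eq_conjTranspose, fromBlocks_conjTranspose,
    fromBlocks_multiply, ← fromBlocks_one, fromBlocks_inj]
  simp only [conjTranspose_zero, Matrix.mul_zero, Matrix.zero_mul, add_zero, zero_add,
    true_and]
  tauto

theorem blockDiagonal'_mem_unitary_iff {o : Type} [Fintype o] [DecidableEq o] {m : o → Type}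
    [∀ i, Fintype (m i)] [∀ i, DecidableEq (m i)] {W : ∀ i, Matrix (m i) (m i) A} :
    blockDiagonal' W ∈ unitary (Matrix (Σ i, m i) (Σ i, m i) A) ↔
      ∀ i, W i ∈ unitary (Matrix (m i) (m i) A) := by
  simp only [Unitary.mem_iff, star_eq_conjTranspose, blockDiagonal'_conjTranspose,
    ← blockDiagonal'_mul, ← blockDiagonal'_one, blockDiagonal'_inj, funext_iff, Pi.one_apply,
    forall_and]

theorem biUnitary_iff [Algebra ℂ A] {ι : Type} [Fintype ι] [DecidableEq ι]
    {u : Matrix ι ι A} :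
    BiUnitary u ↔ u ∈ unitary (Matrix ι ι A) ∧ u.map star ∈ unitary (Matrix ι ι A) := by
  rw [BiUnitary, ← mul_conjTranspose_eq_one_and_iff, ← mul_conjTranspose_eq_one_and_iff,
    and_assoc]

end Unitary

section BlockDiag

variable {A : Type} [Ring A] [Algebra ℂ A] [StarRing A] {r : ℕ} {M : Fin r → ℕ} {s : ℕ}

def caseIBlockDiag (a : ∀ ν, Matrix (Fin (M ν)) (Fin (M ν)) A) (z : Matrix (Fin s) (Fin s) A) :
    Matrix (CaseIIdx r M s) (CaseIIdx r M s) A :=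
  fromBlocks (blockDiagonal' fun ν => fromBlocks (a ν) 0 0 ((a ν).map star)) 0 0 z

variable {a : ∀ ν, Matrix (Fin (M ν)) (Fin (M ν)) A} {z : Matrix (Fin s) (Fin s) A}

theorem caseIBlockDiag_map {B : Type} [Ring B] [Algebra ℂ B] [StarRing B]
    (f : A →⋆ₐ[ℂ] B) :
    (caseIBlockDiag a z).map f = caseIBlockDiag (fun ν => (a ν).map f) (z.map f) := by
  have hf : ⇑f ∘ star = star ∘ ⇑f := funext (map_star f)
  simp only [caseIBlockDiag, fromBlocks_map, blockDiagonal'_map _ _ (map_zero f),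
    Matrix.map_zero _ (map_zero f), Matrix.map_map, hf]

theorem caseIBlockDiag_mem_unitary_iff :
    caseIBlockDiag a z ∈ unitary (Matrix (CaseIIdx r M s) (CaseIIdx r M s) A) ↔
      (∀ ν, BiUnitary (a ν)) ∧ z ∈ unitary (Matrix (Fin s) (Fin s) A) := by
  simp only [caseIBlockDiag, fromBlocks_zero_zero_mem_unitary_iff,
    blockDiagonal'_mem_unitary_iff, biUnitary_iff]

theorem caseIBlockDiag_weight_smul_iff (q : Fin r → ℝ) :
    (∀ b c, caseIWeight q c • caseIBlockDiag a z b c =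
        caseIWeight q b • star (caseIBlockDiag a z (caseISwap b) (caseISwap c))) ↔
      ∀ p t, star (z p t) = z p t := by
  constructor
  · intro h p t
    simpa [caseIBlockDiag, caseIWeight, eq_comm] using h (.inr p) (.inr t)
  · intro hz b c
    rcases b with ⟨ν, j⟩ | p <;> rcases c with ⟨μ, k⟩ | t
    · obtain rfl | hνμ := eq_or_ne ν μ
      · rcases j with j | j <;> rcases k with k | k <;> simp [caseIBlockDiag, caseIWeight]
      · rcases j with j | j <;> rcases k with k | k <;>
          simp [caseIBlockDiag, blockDiagonal'_apply_ne, hνμ]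
    all_goals (try rcases j with j | j) <;> (try rcases k with k | k) <;>
      simp [caseIBlockDiag, caseIWeight, hz]

end BlockDiag

section Relations

variable {A : Type} [Ring A] [Algebra ℂ A] [StarRing A] {r : ℕ} {q : Fin r → ℝ}
  {M : Fin r → ℕ} {s : ℕ}

theorem orthRel_caseI_iff {u : Matrix (CaseIIdx r M s) (CaseIIdx r M s) A} :
    OrthRel (FCaseI r q M s) u ↔ u ∈ unitary (Matrix (CaseIIdx r M s) (CaseIIdx r M s) A) ∧
      ∀ b c, caseIWeight q c • u b c = caseIWeight q b • star (u (caseISwap b) (caseISwap c)) := by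
  rw [OrthRel, ← and_assoc, mul_conjTranspose_eq_one_and_iff, FCaseI_eq_diagonal_mul_permMatrix,
    mul_map_eq_map_mul_map_star_iff]

theorem orthRel_caseIBlockDiag_iff {a : ∀ ν, Matrix (Fin (M ν)) (Fin (M ν)) A}
    {z : Matrix (Fin s) (Fin s) A} :
    OrthRel (FCaseI r q M s) (caseIBlockDiag a z) ↔
      (∀ ν, BiUnitary (a ν)) ∧ (∀ p t, star (z p t) = z p t) ∧ z * zᵀ = 1 ∧ zᵀ * z = 1 := by
  rw [orthRel_caseI_iff, caseIBlockDiag_mem_unitary_iff, caseIBlockDiag_weight_smul_iff]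
  have hzH (hsa : ∀ p t, star (z p t) = z p t) : zᴴ = zᵀ := by ext p t; exact hsa t p
  refine ⟨fun ⟨⟨ha, hz⟩, hsa⟩ => ⟨ha, hsa, ?_⟩, fun ⟨ha, hsa, hz⟩ => ⟨⟨ha, ?_⟩, hsa⟩⟩
  · rwa [← mul_conjTranspose_eq_one_and_iff, hzH hsa] at hz
  · rwa [← mul_conjTranspose_eq_one_and_iff, hzH hsa]

end Relations

theorem OrthRel.map {ι : Type} [Fintype ι] [DecidableEq ι] {A B : Type} [Ring A] [Algebra ℂ A]
    [StarRing A] [Ring B] [Algebra ℂ B] [StarRing B] {F : Matrix ι ι ℂ} {u : Matrix ι ι A}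
    (h : OrthRel F u) (f : A →⋆ₐ[ℂ] B) : OrthRel F (u.map f) := by
  have hF : (F.map (algebraMap ℂ A)).map f = F.map (algebraMap ℂ B) := by
    simp [Matrix.map_map, Function.comp_def, AlgHomClass.commutes]
  have hstar : (u.map star).map f = (u.map f).map star := by
    simp [Matrix.map_map, Function.comp_def, map_star]
  refine ⟨?_, ?_, ?_⟩
  · rw [← conjTranspose_map _ (map_star f), ← Matrix.map_mul, h.1,
      Matrix.map_one _ (map_zero f) (map_one f)]
  · rw [← conjTranspose_map _ (map_star f), ← Matrix.map_mul, h.2.1,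
      Matrix.map_one _ (map_zero f) (map_one f)]
  · rw [← hF, ← Matrix.map_mul, h.2.2, Matrix.map_mul, hstar]

section OffBlock

variable {r : ℕ} {M : Fin r → ℕ} {s : ℕ}

/-- The entries of the blocks `C_{ρμ}`, `X_μ`, `R_μ` and `A_{ρμ}` (`ρ ≠ μ`) of `v`. -/
def offBlockEntries {A : Type} (v : Matrix (CaseIIdx r M s) (CaseIIdx r M s) A) : Set A :=
  {x : A |
    (∃ (ρ μ : Fin r) (j : Fin (M ρ)) (k : Fin (M μ)),
      x = v (.inl ⟨ρ, .inr j⟩) (.inl ⟨μ, .inl k⟩)) ∨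
    (∃ (μ : Fin r) (t : Fin s) (k : Fin (M μ)),
      x = v (.inr t) (.inl ⟨μ, .inl k⟩)) ∨
    (∃ (μ : Fin r) (j : Fin (M μ)) (t : Fin s),
      x = v (.inl ⟨μ, .inl j⟩) (.inr t)) ∨
    ∃ (ρ μ : Fin r), ρ ≠ μ ∧ ∃ (j : Fin (M ρ)) (k : Fin (M μ)),
      x = v (.inl ⟨ρ, .inl j⟩) (.inl ⟨μ, .inl k⟩)}

theorem offBlockEntries_map {A B : Type} (v : Matrix (CaseIIdx r M s) (CaseIIdx r M s) A)
    (f : A → B) : offBlockEntries (v.map f) = f '' offBlockEntries v := by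
  ext x
  simp only [offBlockEntries, Set.mem_image, Set.mem_ofPred_eq, Matrix.map_apply]
  constructor
  · rintro (⟨ρ, μ, j, k, rfl⟩ | ⟨μ, t, k, rfl⟩ | ⟨μ, j, t, rfl⟩ | ⟨ρ, μ, h, j, k, rfl⟩)
    exacts [⟨_, .inl ⟨ρ, μ, j, k, rfl⟩, rfl⟩, ⟨_, .inr (.inl ⟨μ, t, k, rfl⟩), rfl⟩,
      ⟨_, .inr (.inr (.inl ⟨μ, j, t, rfl⟩)), rfl⟩,
      ⟨_, .inr (.inr (.inr ⟨ρ, μ, h, j, k, rfl⟩)), rfl⟩]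
  · rintro ⟨_, (⟨ρ, μ, j, k, rfl⟩ | ⟨μ, t, k, rfl⟩ | ⟨μ, j, t, rfl⟩ | ⟨ρ, μ, h, j, k, rfl⟩), rfl⟩
    exacts [.inl ⟨ρ, μ, j, k, rfl⟩, .inr (.inl ⟨μ, t, k, rfl⟩), .inr (.inr (.inl ⟨μ, j, t, rfl⟩)),
      .inr (.inr (.inr ⟨ρ, μ, h, j, k, rfl⟩))]

theorem offBlockEntries_caseIBlockDiag {A : Type} [Ring A] [StarRing A]
    {a : ∀ ν, Matrix (Fin (M ν)) (Fin (M ν)) A} {z : Matrix (Fin s) (Fin s) A} :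
    ∀ x ∈ offBlockEntries (caseIBlockDiag a z), x = 0 := by
  rintro _ (⟨ρ, μ, j, k, rfl⟩ | ⟨μ, t, k, rfl⟩ | ⟨μ, j, t, rfl⟩ | ⟨ρ, μ, h, j, k, rfl⟩)
  · obtain rfl | h := eq_or_ne ρ μ
    · simp [caseIBlockDiag, blockDiagonal'_apply_eq]
    · simp [caseIBlockDiag, blockDiagonal'_apply_ne, h]
  · simp [caseIBlockDiag]
  · simp [caseIBlockDiag]
  · simp [caseIBlockDiag, blockDiagonal'_apply_ne, h]

theorem eq_caseIBlockDiag_of_orthRel {A : Type} [Ring A] [Algebra ℂ A] [StarRing A]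
    {q : Fin r → ℝ} (hq : ∀ ν, q ν ≠ 0)
    {v : Matrix (CaseIIdx r M s) (CaseIIdx r M s) A} (hv : OrthRel (FCaseI r q M s) v)
    (h0 : ∀ x ∈ offBlockEntries v, x = 0) :
    v = caseIBlockDiag (fun ν => of fun j k => v (.inl ⟨ν, .inl j⟩) (.inl ⟨ν, .inl k⟩))
      (of fun p t => v (.inr p) (.inr t)) := by
  have hsym := (orthRel_caseI_iff.1 hv).2
  have hswap b c (h : v b c = 0) : v (caseISwap b) (caseISwap c) = 0 := by
    have := hsym (caseISwap b) (caseISwap c)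
    rw [caseISwap_caseISwap, caseISwap_caseISwap, h, star_zero, smul_zero, smul_eq_zero] at this
    exact this.resolve_left (caseIWeight_ne_zero hq _)
  have hC ρ μ j k := h0 _ (Or.inl ⟨ρ, μ, j, k, rfl⟩)
  have hX μ t k := h0 _ (Or.inr (Or.inl ⟨μ, t, k, rfl⟩))
  have hR μ j t := h0 _ (Or.inr (Or.inr (Or.inl ⟨μ, j, t, rfl⟩)))
  have hA ρ μ (h : ρ ≠ μ) j k := h0 _ (Or.inr (Or.inr (Or.inr ⟨ρ, μ, h, j, k, rfl⟩)))
  have hB (ν μ : Fin r) (j : Fin (M ν)) (k : Fin (M μ)) :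
      v (.inl ⟨ν, .inl j⟩) (.inl ⟨μ, .inr k⟩) = 0 := hswap _ _ (hC ν μ j k)
  have hD (ν μ : Fin r) (h : ν ≠ μ) (j : Fin (M ν)) (k : Fin (M μ)) :
      v (.inl ⟨ν, .inr j⟩) (.inl ⟨μ, .inr k⟩) = 0 := hswap _ _ (hA ν μ h j k)
  have hQT (ν : Fin r) (j : Fin (M ν)) (t : Fin s) :
      v (.inl ⟨ν, .inr j⟩) (.inr t) = 0 := hswap _ _ (hR ν j t)
  have hTQ (μ : Fin r) (t : Fin s) (k : Fin (M μ)) :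
      v (.inr t) (.inl ⟨μ, .inr k⟩) = 0 := hswap _ _ (hX μ t k)
  -- both weights are `q_ν⁻¹`, so they cancel
  have hQQ (ν : Fin r) (j k : Fin (M ν)) :
      v (.inl ⟨ν, .inr j⟩) (.inl ⟨ν, .inr k⟩) = star (v (.inl ⟨ν, .inl j⟩) (.inl ⟨ν, .inl k⟩)) :=
    smul_right_injective A (caseIWeight_ne_zero hq (.inl ⟨ν, .inr k⟩))
      (hsym (.inl ⟨ν, .inr j⟩) (.inl ⟨ν, .inr k⟩))
  ext b c
  rcases b with ⟨ν, j⟩ | p <;> rcases c with ⟨μ, k⟩ | t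
  · obtain rfl | hνμ := eq_or_ne ν μ
    · rcases j with j | j <;> rcases k with k | k <;> simp [caseIBlockDiag, hB, hC, hQQ]
    · rcases j with j | j <;> rcases k with k | k <;>
        simp [caseIBlockDiag, blockDiagonal'_apply_ne, hνμ, hA, hB, hC, hD]
  all_goals (try rcases j with j | j) <;> (try rcases k with k | k) <;>
    simp [caseIBlockDiag, hR, hQT, hX, hTQ]

end OffBlock

section Homomorphism

variable {r : ℕ} {q : Fin r → ℝ} {M : Fin r → ℕ} {s : ℕ}

theorem surjective_of_map_u_eq_caseIBlockDiag (hq : ∀ ν, q ν ≠ 0) (P : PolO (FCaseI r q M s))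
    (B : FreeProdUO r M s) (φ : P.carrier →⋆ₐ[ℂ] B.carrier)
    (hφ : P.u.map φ = caseIBlockDiag B.a B.z) : Function.Surjective φ := by
  set S := φ.range
  set v := P.u.map φ.rangeRestrict
  have hvS : v.map S.subtype = caseIBlockDiag B.a B.z := by rw [Matrix.map_map]; exact hφ
  have hv := eq_caseIBlockDiag_of_orthRel hq (P.rel.map φ.rangeRestrict) fun x hx =>
    Subtype.coe_injective <| offBlockEntries_caseIBlockDiag (S.subtype x) <| by
      rw [← hvS, offBlockEntries_map]; exact ⟨x, hx, rfl⟩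
  obtain ⟨ha, hsa, hz⟩ := orthRel_caseIBlockDiag_iff.1 (hv ▸ P.rel.map φ.rangeRestrict)
  obtain ⟨ψ, hψ, -⟩ := B.universal S _ _ ha hsa hz.1 hz.2
  have : S.subtype.comp ψ = StarAlgHom.id ℂ B.carrier := by
    refine (B.universal _ B.a B.z B.rel_a B.rel_z_star B.rel_z.1 B.rel_z.2).unique ?_ ?_
    · refine ⟨fun ν j k => ?_, fun p t => ?_⟩
      · rw [StarAlgHom.comp_apply, hψ.1]
        simpa [caseIBlockDiag, v] using congr_fun₂ hvS (.inl ⟨ν, .inl j⟩) (.inl ⟨ν, .inl k⟩)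
      · rw [StarAlgHom.comp_apply, hψ.2]
        simpa [caseIBlockDiag, v] using congr_fun₂ hvS (.inr p) (.inr t)
    · exact ⟨fun _ _ _ => rfl, fun _ _ => rfl⟩
  intro x
  obtain ⟨y, hy⟩ := (ψ x).2
  exact ⟨y, hy.trans (DFunLike.congr_fun this x)⟩

theorem ker_eq_starIdealSpan_offBlockEntries (hq : ∀ ν, q ν ≠ 0) (P : PolO (FCaseI r q M s))
    (B : FreeProdUO r M s) (φ : P.carrier →⋆ₐ[ℂ] B.carrier)
    (hφ : P.u.map φ = caseIBlockDiag B.a B.z) :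
    {x | φ x = 0} = starIdealSpan (offBlockEntries P.u) := by
  refine subset_antisymm ?_ (starIdealSpan_subset (isStarIdeal_ker φ) fun x hx => ?_)
  · obtain ⟨Q, _, _, _, _, π, hπ⟩ :=
      (isStarIdeal_starIdealSpan (offBlockEntries P.u)).exists_starAlgHom_ker_eq (R := ℂ)
    have hπu := eq_caseIBlockDiag_of_orthRel hq (P.rel.map π) <| by
      rw [offBlockEntries_map]
      rintro _ ⟨x, hx, rfl⟩
      exact (hπ x).2 (subset_starIdealSpan _ hx)
    obtain ⟨ha, hsa, hz⟩ := orthRel_caseIBlockDiag_iff.1 (hπu ▸ P.rel.map π)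
    obtain ⟨ψ, ⟨hψa, hψz⟩, -⟩ := B.universal Q _ _ ha hsa hz.1 hz.2
    have hψφ : ψ.comp φ = π := by
      have hψu : (P.u.map φ).map ψ = P.u.map π := by
        rw [hφ, caseIBlockDiag_map, hπu]
        exact congrArg₂ _ (funext fun ν => Matrix.ext (hψa ν)) (Matrix.ext hψz)
      exact (P.universal Q _ (P.rel.map π)).unique (congr_fun₂ hψu) fun _ _ => rfl
    intro x hx
    rw [Set.mem_ofPred_eq] at hx
    rw [← hπ, ← hψφ, StarAlgHom.comp_apply, hx, map_zero]
  · refine offBlockEntries_caseIBlockDiag (a := B.a) (z := B.z) (φ x) ?_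
    rw [← hφ, offBlockEntries_map]
    exact ⟨x, hx, rfl⟩

end Homomorphism

theorem caseI_rfd_quotient_iso_general (r : ℕ) (q : Fin r → ℝ) (hq0 : ∀ ν, 0 < q ν)
    (M : Fin r → ℕ) (s : ℕ) (P : PolO (FCaseI r q M s)) (B : FreeProdUO r M s) :
    ∃ φ : P.carrier →⋆ₐ[ℂ] B.carrier,
      Function.Surjective φ ∧
      (∀ (ν : Fin r) (j k : Fin (M ν)),
        φ (P.u (.inl ⟨ν, .inl j⟩) (.inl ⟨ν, .inl k⟩)) = B.a ν j k) ∧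
      (∀ p t : Fin s, φ (P.u (.inr p) (.inr t)) = B.z p t) ∧
      {x : P.carrier | φ x = 0} =
        starIdealSpan
          {x : P.carrier |
            (∃ (ρ μ : Fin r) (j : Fin (M ρ)) (k : Fin (M μ)),
              x = P.u (.inl ⟨ρ, .inr j⟩) (.inl ⟨μ, .inl k⟩)) ∨
            (∃ (μ : Fin r) (t : Fin s) (k : Fin (M μ)),
              x = P.u (.inr t) (.inl ⟨μ, .inl k⟩)) ∨
            (∃ (μ : Fin r) (j : Fin (M μ)) (t : Fin s),
              x = P.u (.inl ⟨μ, .inl j⟩) (.inr t)) ∨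
            ∃ (ρ μ : Fin r), ρ ≠ μ ∧ ∃ (j : Fin (M ρ)) (k : Fin (M μ)),
              x = P.u (.inl ⟨ρ, .inl j⟩) (.inl ⟨μ, .inl k⟩)} := by
  have hq : ∀ ν, q ν ≠ 0 := fun ν => (hq0 ν).ne'
  have hV : OrthRel (FCaseI r q M s) (caseIBlockDiag B.a B.z) :=
    orthRel_caseIBlockDiag_iff.2 ⟨B.rel_a, B.rel_z_star, B.rel_z⟩
  obtain ⟨φ, hφ, -⟩ := P.universal B.carrier _ hV
  have hφu : P.u.map φ = caseIBlockDiag B.a B.z := Matrix.ext hφ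
  refine ⟨φ, surjective_of_map_u_eq_caseIBlockDiag hq P B φ hφu, fun ν j k => ?_, fun p t => ?_,
    ker_eq_starIdealSpan_offBlockEntries hq P B φ hφu⟩ <;> simp [hφ, caseIBlockDiag]

/-- in the Case I setting, the quotient of `Pol(O_F⁺)` by the two-sided
*-ideal `I'` generated by all entries of the blocks `C_{ρμ}`, `X_μ`, `R_μ` and `A_{ρμ}`
(`ρ ≠ μ`) is *-isomorphic to `(⋆_{ν=1}^r Pol(U⁺_{M_ν})) ⋆ Pol(O⁺_{N−2K})`, the class of an
entry of `A_{νν}` (resp. of `Z`) corresponding to `a⁽ᵛ⁾_{jk}` (resp. `z_{pq}`).  This is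
expressed by a surjective unital *-homomorphism whose kernel is exactly `I'`. -/
theorem caseI_rfd_quotient_iso (r : ℕ) (hr : 1 ≤ r) (q : Fin r → ℝ) (hq0 : ∀ ν, 0 < q ν)
    (hq1 : ∀ ν, q ν < 1) (hmono : StrictMono q) (M : Fin r → ℕ) (hM : ∀ ν, 1 ≤ M ν)
    (s : ℕ) (P : PolO (FCaseI r q M s)) (B : FreeProdUO r M s) :
    ∃ φ : P.carrier →⋆ₐ[ℂ] B.carrier,
      Function.Surjective φ ∧
      (∀ (ν : Fin r) (j k : Fin (M ν)),
        φ (P.u (.inl ⟨ν, .inl j⟩) (.inl ⟨ν, .inl k⟩)) = B.a ν j k) ∧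
      (∀ p t : Fin s, φ (P.u (.inr p) (.inr t)) = B.z p t) ∧
      {x : P.carrier | φ x = 0} =
        starIdealSpan
          {x : P.carrier |
            (∃ (ρ μ : Fin r) (j : Fin (M ρ)) (k : Fin (M μ)),
              x = P.u (.inl ⟨ρ, .inr j⟩) (.inl ⟨μ, .inl k⟩)) ∨
            (∃ (μ : Fin r) (t : Fin s) (k : Fin (M μ)),
              x = P.u (.inr t) (.inl ⟨μ, .inl k⟩)) ∨
            (∃ (μ : Fin r) (j : Fin (M μ)) (t : Fin s),
              x = P.u (.inl ⟨μ, .inl j⟩) (.inr t)) ∨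
            ∃ (ρ μ : Fin r), ρ ≠ μ ∧ ∃ (j : Fin (M ρ)) (k : Fin (M μ)),
              x = P.u (.inl ⟨ρ, .inl j⟩) (.inl ⟨μ, .inl k⟩)} :=
  caseI_rfd_quotient_iso_general r q hq0 M s P B
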